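/- arXiv:2604.00266 — 3 statements merged into one kernel-verified Lean document; each statement's English description precedes it below -/
import Mathlib

section
/- The sequence of A-modules 0 → J ⊕ J' → A ⋈^{f,g}(J,J') → A/I₀ → 0 (where the first map is the natural embedding (j,j') ↦ (j,j') and the second is the natural projection (f(a)+j, g(a)+j') ↦ a + I₀) is split exact if and only if there exist x ∈ J and y ∈ J' such that f(i) = x·f(i) and g(i) = y·g(i) for all i ∈ I₀. -/
open IsLocalRing

variable {A B C : Type} [CommRing A] [CommRing B] [CommRing C]

def BiAmalg (f : A →+* B) (g : A →+* C) (J : Ideal B) (J' : Ideal C) :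
    Subring (B × C) where
  carrier := {x | ∃ a : A, ∃ j ∈ J, ∃ j' ∈ J', x = (f a + j, g a + j')}
  zero_mem' := ⟨0, 0, J.zero_mem, 0, J'.zero_mem, by ext <;> simp⟩
  one_mem' := ⟨1, 0, J.zero_mem, 0, J'.zero_mem, by ext <;> simp⟩
  add_mem' := by
    rintro x y ⟨a, j, hj, j', hj', rfl⟩ ⟨b, k, hk, k', hk', rfl⟩
    exact ⟨a + b, j + k, J.add_mem hj hk, j' + k', J'.add_mem hj' hk', by
      simp only [Prod.mk_add_mk, map_add, Prod.mk.injEq]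
      constructor <;> ring⟩
  neg_mem' := by
    rintro x ⟨a, j, hj, j', hj', rfl⟩
    exact ⟨-a, -j, J.neg_mem hj, -j', J'.neg_mem hj', by
      simp only [Prod.neg_mk, map_neg, Prod.mk.injEq]
      constructor <;> ring⟩
  mul_mem' := by
    rintro x y ⟨a, j, hj, j', hj', rfl⟩ ⟨b, k, hk, k', hk', rfl⟩
    exact ⟨a * b, f a * k + j * f b + j * k,
      J.add_mem (J.add_mem (J.mul_mem_left _ hk) (J.mul_mem_right _ hj)) (J.mul_mem_right _ hj),
      g a * k' + j' * g b + j' * k',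
      J'.add_mem (J'.add_mem (J'.mul_mem_left _ hk') (J'.mul_mem_right _ hj'))
        (J'.mul_mem_right _ hj'), by
      simp only [Prod.mk_mul_mk, map_mul, Prod.mk.injEq]
      constructor <;> ring⟩

theorem BiAmalg.mem_mk (f : A →+* B) (g : A →+* C) (J : Ideal B) (J' : Ideal C)
    (a : A) {j : B} (hj : j ∈ J) {j' : C} (hj' : j' ∈ J') :
    (f a + j, g a + j') ∈ BiAmalg f g J J' :=
  ⟨a, j, hj, j', hj', rfl⟩

def BiAmalg.incl (f : A →+* B) (g : A →+* C) (J : Ideal B) (J' : Ideal C) :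
    A →+* BiAmalg f g J J' where
  toFun a := ⟨(f a, g a), a, 0, J.zero_mem, 0, J'.zero_mem, by simp⟩
  map_one' := Subtype.ext (by simp)
  map_mul' x y := Subtype.ext (by simp [Prod.mk_mul_mk])
  map_zero' := Subtype.ext (by simp)
  map_add' x y := Subtype.ext (by simp [Prod.mk_add_mk])

instance BiAmalg.moduleA (f : A →+* B) (g : A →+* C) (J : Ideal B) (J' : Ideal C) :
    Module A (BiAmalg f g J J') :=
  Module.compHom _ (BiAmalg.incl f g J J')

/-- The natural embedding `J ⊕ J' → A ⋈^{f,g} (J, J')`, `(j, j') ↦ (j, j')`. -/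
def BiAmalg.emb (f : A →+* B) (g : A →+* C) (J : Ideal B) (J' : Ideal C) :
    J × J' → BiAmalg f g J J' :=
  fun p => ⟨((p.1 : B), (p.2 : C)), 0, p.1, p.1.2, p.2, p.2.2, by simp⟩

/-!
Injectivity of the embedding, surjectivity of the projection and exactness in the middle hold
without any condition: if `π (f a + j, g a + j') = 0` then `a ∈ I₀`, so `f a + j ∈ J` and, as
`I₀ = g⁻¹(J')`, also `g a + j' ∈ J'`. A section of `π : M → A ⧸ I₀` is the same as an element
`s ∈ M` with `π s = 1` that is annihilated by `I₀`. Writing `s = (1 - x, 1 - y)`, the condition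
`π s = 1` says exactly `x ∈ J` and `y ∈ J'`, and `i • s = 0` says `f i * (1 - x) = 0` and
`g i * (1 - y) = 0`.
-/

theorem Ideal.exists_rightInverse_quotient_iff {R M : Type*} [CommRing R] [AddCommGroup M]
    [Module R M] (I : Ideal R) (π : M →ₗ[R] R ⧸ I) :
    (∃ σ : R ⧸ I →ₗ[R] M, π ∘ₗ σ = LinearMap.id) ↔
      ∃ s : M, π s = Ideal.Quotient.mk I 1 ∧ ∀ i ∈ I, i • s = 0 := by
  constructor
  · rintro ⟨σ, hσ⟩
    refine ⟨σ (Ideal.Quotient.mk I 1), LinearMap.congr_fun hσ _, fun i hi => ?_⟩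
    have hi_one : i • Ideal.Quotient.mk I (1 : R) = 0 := by
      rw [Algebra.smul_def, Ideal.Quotient.algebraMap_eq, ← map_mul, mul_one,
        Ideal.Quotient.eq_zero_iff_mem.mpr hi]
    rw [← map_smul, hi_one, map_zero]
  · rintro ⟨s, hs, hIs⟩
    refine ⟨Submodule.liftQ I (LinearMap.toSpanSingleton R M s) fun i hi => hIs i hi, ?_⟩
    refine Submodule.linearMap_qext _ (LinearMap.ext fun a => ?_)
    change π (a • s) = Ideal.Quotient.mk I a
    rw [map_smul, hs, Algebra.smul_def, Ideal.Quotient.algebraMap_eq, ← map_mul, mul_one]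

namespace BiAmalg

variable (f : A →+* B) (g : A →+* C) (J : Ideal B) (J' : Ideal C)

def IsNaturalProj (π : BiAmalg f g J J' →ₗ[A] A ⧸ J.comap f) : Prop :=
  ∀ (a : A) (j : B) (hj : j ∈ J) (j' : C) (hj' : j' ∈ J'),
    π ⟨(f a + j, g a + j'), mem_mk f g J J' a hj hj'⟩ = Ideal.Quotient.mk (J.comap f) a

variable {f g J J'}

theorem coe_smul (a : A) (z : BiAmalg f g J J') :
    ((a • z : BiAmalg f g J J') : B × C) = (f a * (z : B × C).1, g a * (z : B × C).2) :=
  rfl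

theorem smul_eq_zero_iff (a : A) (z : BiAmalg f g J J') :
    a • z = 0 ↔ f a * (z : B × C).1 = 0 ∧ g a * (z : B × C).2 = 0 := by
  rw [← Subtype.coe_inj, coe_smul]
  exact Prod.ext_iff

theorem emb_injective : Function.Injective (emb f g J J') := by
  rintro ⟨p, p'⟩ ⟨q, q'⟩ h
  obtain ⟨hpq, hpq'⟩ := Prod.ext_iff.mp (congrArg Subtype.val h)
  exact Prod.ext (Subtype.ext hpq) (Subtype.ext hpq')

namespace IsNaturalProj

variable {π : BiAmalg f g J J' →ₗ[A] A ⧸ J.comap f}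

theorem apply_eq (hπ : IsNaturalProj f g J J' π) (z : BiAmalg f g J J') (a : A) {j : B}
    (hj : j ∈ J) {j' : C} (hj' : j' ∈ J') (hz : (z : B × C) = (f a + j, g a + j')) :
    π z = Ideal.Quotient.mk (J.comap f) a := by
  obtain rfl : z = ⟨(f a + j, g a + j'), mem_mk f g J J' a hj hj'⟩ := Subtype.ext hz
  exact hπ a j hj j' hj'

theorem surjective (hπ : IsNaturalProj f g J J' π) : Function.Surjective π := by
  rintro ⟨a⟩
  exact ⟨incl f g J J' a, hπ.apply_eq _ a J.zero_mem J'.zero_mem (by simp [incl])⟩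

theorem exact (hI : J.comap f = J'.comap g) (hπ : IsNaturalProj f g J J' π) :
    Function.Exact (emb f g J J') π := by
  intro z
  obtain ⟨a, j, hj, j', hj', hz⟩ := z.2
  constructor
  · intro hπz
    have ha : a ∈ J.comap f :=
      Ideal.Quotient.eq_zero_iff_mem.mp (hπ.apply_eq z a hj hj' hz ▸ hπz)
    have hga : a ∈ J'.comap g := hI ▸ ha
    exact ⟨(⟨f a + j, J.add_mem ha hj⟩, ⟨g a + j', J'.add_mem hga hj'⟩), Subtype.ext hz.symm⟩
  · rintro ⟨⟨⟨k, hk⟩, ⟨k', hk'⟩⟩, rfl⟩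
    simpa using hπ.apply_eq _ 0 hk hk' (by simp [emb])

theorem apply_eq_one_iff (hI : J.comap f = J'.comap g) (hπ : IsNaturalProj f g J J' π)
    (z : BiAmalg f g J J') :
    π z = Ideal.Quotient.mk (J.comap f) 1 ↔ 1 - (z : B × C).1 ∈ J ∧ 1 - (z : B × C).2 ∈ J' := by
  obtain ⟨a, j, hj, j', hj', hz⟩ := z.2
  have hf : 1 - (f a + j) = -(f (a - 1) + j) := by rw [map_sub, map_one]; ring
  have hg : 1 - (g a + j') = -(g (a - 1) + j') := by rw [map_sub, map_one]; ring
  rw [hπ.apply_eq z a hj hj' hz, hz, Ideal.Quotient.eq, hf, hg, J.neg_mem_iff, J'.neg_mem_iff,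
    J.add_mem_iff_left hj, J'.add_mem_iff_left hj', ← Ideal.mem_comap, ← Ideal.mem_comap, ← hI,
    and_self]

theorem exists_annihilated_preimage_one_iff (hI : J.comap f = J'.comap g)
    (hπ : IsNaturalProj f g J J' π) :
    (∃ s, π s = Ideal.Quotient.mk (J.comap f) 1 ∧ ∀ i ∈ J.comap f, i • s = 0) ↔
      ∃ x ∈ J, ∃ y ∈ J', ∀ i ∈ J.comap f, f i = x * f i ∧ g i = y * g i := by
  constructor
  · rintro ⟨s, hs, hIs⟩
    obtain ⟨hx, hy⟩ := (hπ.apply_eq_one_iff hI s).mp hs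
    refine ⟨_, hx, _, hy, fun i hi => ?_⟩
    obtain ⟨h1, h2⟩ := (smul_eq_zero_iff i s).mp (hIs i hi)
    exact ⟨by linear_combination h1, by linear_combination h2⟩
  · rintro ⟨x, hx, y, hy, hxy⟩
    let s : BiAmalg f g J J' := ⟨(1 - x, 1 - y), by
      simpa [sub_eq_add_neg] using mem_mk f g J J' 1 (J.neg_mem hx) (J'.neg_mem hy)⟩
    refine ⟨s, (hπ.apply_eq_one_iff hI s).mpr (by simpa [s] using ⟨hx, hy⟩),
      fun i hi => (smul_eq_zero_iff i s).mpr ?_⟩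
    obtain ⟨h1, h2⟩ := hxy i hi
    exact ⟨by linear_combination h1, by linear_combination h2⟩

end IsNaturalProj

end BiAmalg

theorem biAmalg_splitExact_iff (f : A →+* B) (g : A →+* C) (J : Ideal B) (J' : Ideal C)
    (hI : J.comap f = J'.comap g)
    (π : BiAmalg f g J J' →ₗ[A] A ⧸ J.comap f)
    (hπ : ∀ (a : A) (j : B) (hj : j ∈ J) (j' : C) (hj' : j' ∈ J'),
      π ⟨(f a + j, g a + j'), BiAmalg.mem_mk f g J J' a hj hj'⟩ =
        Ideal.Quotient.mk (J.comap f) a) :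
    (Function.Injective (BiAmalg.emb f g J J') ∧
      Function.Exact (BiAmalg.emb f g J J') π ∧
      Function.Surjective π ∧
      ∃ σ : A ⧸ J.comap f →ₗ[A] BiAmalg f g J J', π ∘ₗ σ = LinearMap.id) ↔
    ∃ x ∈ J, ∃ y ∈ J', ∀ i ∈ J.comap f, f i = x * f i ∧ g i = y * g i := by
  have hπ' : BiAmalg.IsNaturalProj f g J J' π := hπ
  rw [← hπ'.exists_annihilated_preimage_one_iff hI, ← Ideal.exists_rightInverse_quotient_iff]
  exact ⟨fun h => h.2.2.2, fun h => ⟨BiAmalg.emb_injective, hπ'.exact hI, hπ'.surjective, h⟩⟩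
end

section
/- Let (A, m) be a Noetherian local ring with J ⊆ Jac(B) and J' ⊆ Jac(C), and assume J and J' are finitely generated as A-modules. Then the Krull dimension of A ⋈^{f,g}(J,J') equals the Krull dimension of A/(ker f ∩ ker g). -/
/-! The bi-amalgamation is spanned over `A` by the image of `A` and by `J × J'`, so when `J` and
`J'` are finite it is a finite, hence integral, extension of `A ⧸ (ker f ⊓ ker g)`, the quotient
of `A` by the kernel of `a ↦ (f a, g a)`. Lying over, going up and incomparability make
`Spec` of an injective integral extension and `Spec` of its base have the same chain lengths. -/

open IsLocalRing

variable {A B C : Type} [CommRing A] [CommRing B] [CommRing C]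

theorem ringKrullDim_eq_of_isIntegral {R S : Type*} [CommRing R] [CommRing S] [Algebra R S]
    [Algebra.IsIntegral R S] [FaithfulSMul R S] : ringKrullDim S = ringKrullDim R := by
  refine le_antisymm ?_ ?_
  · exact Order.krullDim_le_of_strictMono (PrimeSpectrum.comap (algebraMap R S))
      fun _ _ hPQ => Ideal.IsIntegral.comap_lt_comap hPQ
  · refine iSup_le fun l => ?_
    obtain ⟨⟨P, _, _⟩⟩ := Ideal.nonempty_primesOver (S := S) l.head.asIdeal
    obtain ⟨L, hL, -⟩ := Ideal.exists_ltSeries_of_hasGoingUp l P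
    exact hL ▸ Order.LTSeries.length_le_krullDim L

theorem RingHom.IsIntegral.ringKrullDim_eq_quotient_ker {R S : Type*} [CommRing R] [CommRing S]
    {φ : R →+* S} (hφ : φ.IsIntegral) : ringKrullDim S = ringKrullDim (R ⧸ RingHom.ker φ) :=
  letI := φ.kerLift.toAlgebra
  haveI : Algebra.IsIntegral (R ⧸ RingHom.ker φ) S := ⟨hφ.kerLift⟩
  haveI := (faithfulSMul_iff_algebraMap_injective _ S).mpr φ.kerLift_injective
  ringKrullDim_eq_of_isIntegral

namespace BiAmalg

variable (f : A →+* B) (g : A →+* C) (J : Ideal B) (J' : Ideal C)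

theorem ker_incl : RingHom.ker (incl f g J J') = RingHom.ker f ⊓ RingHom.ker g := by
  ext a
  simp [RingHom.mem_ker, Subtype.ext_iff, incl, Prod.ext_iff]

theorem finite_incl (hJ : letI := Module.compHom J f; Module.Finite A J)
    (hJ' : letI := Module.compHom J' g; Module.Finite A J') : (incl f g J J').Finite := by
  let := Module.compHom J f
  let := Module.compHom J' g
  let := (incl f g J J').toAlgebra
  let ι : J × J' →ₗ[A] BiAmalg f g J J' :=
    { toFun x := ⟨((x.1 : B), (x.2 : C)), by simpa using mem_mk f g J J' 0 x.1.2 x.2.2⟩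
      map_add' _ _ := rfl
      map_smul' _ _ := rfl }
  show Module.Finite A (BiAmalg f g J J')
  refine Module.Finite.of_surjective ((Algebra.linearMap A _).coprod ι) ?_
  rintro ⟨_, a, j, hj, j', hj', rfl⟩
  exact ⟨(a, ⟨j, hj⟩, ⟨j', hj'⟩), rfl⟩

end BiAmalg

theorem biAmalg_ringKrullDim_general (f : A →+* B) (g : A →+* C) (J : Ideal B) (J' : Ideal C) :
    letI : Module A J := Module.compHom _ f
    letI : Module A J' := Module.compHom _ g
    Module.Finite A J → Module.Finite A J' →
    ringKrullDim (BiAmalg f g J J') = ringKrullDim (A ⧸ (RingHom.ker f ⊓ RingHom.ker g)) := by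
  intro hJ hJ'
  rw [← BiAmalg.ker_incl f g J J']
  exact (BiAmalg.finite_incl f g J J' hJ hJ').to_isIntegral.ringKrullDim_eq_quotient_ker

theorem biAmalg_ringKrullDim (f : A →+* B) (g : A →+* C) (J : Ideal B) (J' : Ideal C)
    [IsNoetherianRing A] [IsLocalRing A]
    (hI : J.comap f = J'.comap g)
    (hJ : J ≤ (⊥ : Ideal B).jacobson) (hJ' : J' ≤ (⊥ : Ideal C).jacobson) :
    letI : Module A J := Module.compHom _ f
    letI : Module A J' := Module.compHom _ g
    Module.Finite A J → Module.Finite A J' →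
    ringKrullDim (BiAmalg f g J J') = ringKrullDim (A ⧸ (RingHom.ker f ⊓ RingHom.ker g)) :=
  biAmalg_ringKrullDim_general f g J J'
end

section
/- If the annihilator of J' in the ring g(A) + J' is zero, then there is an isomorphism of (f(A)+J)-modules Hom_{A ⋈^{f,g}(J,J')}(f(A)+J, A ⋈^{f,g}(J,J')) ≅ J × 0, where f(A)+J is regarded as an A ⋈^{f,g}(J,J')-module via the surjection A ⋈^{f,g}(J,J') → f(A)+J, (b,c) ↦ b, whose kernel is 0 × J', and J × 0 is the ideal {(j,0) : j ∈ J} of A ⋈^{f,g}(J,J'). -/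
open IsLocalRing

variable {A B C : Type} [CommRing A] [CommRing B] [CommRing C]

/-- The subring `f(A) + J` of `B`. -/
def ImageAddIdeal (f : A →+* B) (J : Ideal B) : Subring B where
  carrier := {x | ∃ a : A, ∃ j ∈ J, x = f a + j}
  zero_mem' := ⟨0, 0, J.zero_mem, by simp⟩
  one_mem' := ⟨1, 0, J.zero_mem, by simp⟩
  add_mem' := by
    rintro x y ⟨a, j, hj, rfl⟩ ⟨b, k, hk, rfl⟩
    exact ⟨a + b, j + k, J.add_mem hj hk, by rw [map_add]; ring⟩
  neg_mem' := by
    rintro x ⟨a, j, hj, rfl⟩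
    exact ⟨-a, -j, J.neg_mem hj, by rw [map_neg]; ring⟩
  mul_mem' := by
    rintro x y ⟨a, j, hj, rfl⟩ ⟨b, k, hk, rfl⟩
    exact ⟨a * b, f a * k + j * f b + j * k,
      J.add_mem (J.add_mem (J.mul_mem_left _ hk) (J.mul_mem_right _ hj)) (J.mul_mem_right _ hj),
      by rw [map_mul]; ring⟩

/-- The projection `A ⋈^{f,g} (J, J') → f(A) + J` onto the first coordinate; it is a
surjective ring homomorphism with kernel `0 × J'`. -/
def BiAmalg.projFJ (f : A →+* B) (g : A →+* C) (J : Ideal B) (J' : Ideal C) :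
    BiAmalg f g J J' →+* ImageAddIdeal f J where
  toFun x := ⟨(x : B × C).1, by
    obtain ⟨a, j, hj, j', hj', hx⟩ := x.2
    exact ⟨a, j, hj, by rw [hx]⟩⟩
  map_one' := rfl
  map_mul' x y := rfl
  map_zero' := rfl
  map_add' x y := rfl

/-- The ideal `J × 0 = {(j, 0) : j ∈ J}` of `A ⋈^{f,g} (J, J')`. -/
def BiAmalg.idealJ0 (f : A →+* B) (g : A →+* C) (J : Ideal B) (J' : Ideal C) :
    Ideal (BiAmalg f g J J') where
  carrier := {x | ∃ j ∈ J, (x : B × C) = (j, 0)}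
  zero_mem' := ⟨0, J.zero_mem, by ext <;> simp⟩
  add_mem' := by
    rintro x y ⟨j, hj, hx⟩ ⟨k, hk, hy⟩
    refine ⟨j + k, J.add_mem hj hk, ?_⟩
    have : ((x + y : BiAmalg f g J J') : B × C) = (x : B × C) + (y : B × C) := rfl
    rw [this, hx, hy]
    simp
  smul_mem' := by
    rintro c x ⟨j, hj, hx⟩
    refine ⟨(c : B × C).1 * j, J.mul_mem_left _ hj, ?_⟩
    have : ((c • x : BiAmalg f g J J') : B × C) = (c : B × C) * (x : B × C) := rfl
    rw [this, hx]
    simp [Prod.ext_iff]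

/-!
Since `f(A)+J` is a quotient of `R = A ⋈^{f,g}(J,J')` generated by `1`, with the annihilator of
`1` being `0 × J'`, a homomorphism `φ : f(A)+J → R` is determined by `φ 1`, and `φ 1` may be any
element of `R` killed by `0 × J'`. An element `(f a + j, g a + j')` kills `0 × J'` exactly when
`(g a + j') J' = 0`, that is, by the annihilator hypothesis, when `g a + j' = 0`. Then
`g a ∈ J'`, so `a ∈ g⁻¹(J') = f⁻¹(J)` and `f a + j ∈ J`: these elements form `J × 0`.
-/

namespace Submodule

variable {R N M : Type*} [CommRing R] [AddCommGroup N] [Module R N] [AddCommGroup M] [Module R M]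

theorem smul_eq_smul_of_mem_torsionBySet_torsionOf {e : N} {m : M}
    (hm : m ∈ torsionBySet R M (Ideal.torsionOf R N e)) {r s : R} (h : r • e = s • e) :
    r • m = s • m := by
  rw [← sub_eq_zero, ← sub_smul] at h ⊢
  exact (mem_torsionBySet_iff _ _).mp hm ⟨r - s, h⟩

noncomputable def homEquivTorsionBySetTorsionOf (e : N) (he : ∀ n : N, ∃ r : R, r • e = n) :
    (N →ₗ[R] M) ≃ₗ[R] torsionBySet R M (Ideal.torsionOf R N e) where
  toFun φ := ⟨φ e, (mem_torsionBySet_iff _ _).mpr fun ⟨r, hr⟩ => by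
    rw [← map_smul, (Ideal.mem_torsionOf_iff _ _).mp hr, map_zero]⟩
  map_add' _ _ := rfl
  map_smul' _ _ := rfl
  invFun m :=
    { toFun n := (he n).choose • (m : M)
      map_add' n n' := by
        rw [← add_smul]
        refine smul_eq_smul_of_mem_torsionBySet_torsionOf m.2 ?_
        rw [add_smul, (he _).choose_spec, (he _).choose_spec, (he _).choose_spec]
      map_smul' c n := by
        rw [RingHom.id_apply, smul_smul]
        refine smul_eq_smul_of_mem_torsionBySet_torsionOf m.2 ?_
        rw [mul_smul, (he _).choose_spec, (he _).choose_spec] }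
  left_inv φ := by
    ext n
    simp only [LinearMap.coe_mk, AddHom.coe_mk]
    rw [← map_smul, (he n).choose_spec]
  right_inv m := by
    ext
    simp only [LinearMap.coe_mk, AddHom.coe_mk]
    exact (smul_eq_smul_of_mem_torsionBySet_torsionOf m.2 (s := 1)
      (by rw [(he e).choose_spec, one_smul])).trans (one_smul R _)

end Submodule

namespace BiAmalg

variable (f : A →+* B) (g : A →+* C) (J : Ideal B) (J' : Ideal C)

instance moduleImageAddIdeal : Module (BiAmalg f g J J') (ImageAddIdeal f J) :=
  Module.compHom _ (projFJ f g J J')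

theorem coe_smul_imageAddIdeal (r : BiAmalg f g J J') (m : ImageAddIdeal f J) :
    ((r • m : ImageAddIdeal f J) : B) = (r : B × C).1 * m := rfl

theorem exists_smul_one_eq (m : ImageAddIdeal f J) :
    ∃ r : BiAmalg f g J J', r • (1 : ImageAddIdeal f J) = m := by
  obtain ⟨a, j, hj, hm⟩ := m.2
  exact ⟨⟨(f a + j, g a + 0), mem_mk f g J J' a hj J'.zero_mem⟩,
    Subtype.ext (by rw [coe_smul_imageAddIdeal, hm, OneMemClass.coe_one, mul_one])⟩

theorem mem_torsionOf_one_iff (r : BiAmalg f g J J') :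
    r ∈ Ideal.torsionOf _ (ImageAddIdeal f J) 1 ↔ (r : B × C).1 = 0 := by
  rw [Ideal.mem_torsionOf_iff, ← Subtype.coe_inj, coe_smul_imageAddIdeal, OneMemClass.coe_one,
    mul_one, ZeroMemClass.coe_zero]

variable {f g J J'}

theorem fst_mem_of_snd_mem (hI : J.comap f = J'.comap g) {x : BiAmalg f g J J'}
    (hx : (x : B × C).2 ∈ J') : (x : B × C).1 ∈ J := by
  obtain ⟨a, j, hj, j', hj', hxe⟩ := x.2
  rw [hxe] at hx ⊢
  have ha : a ∈ J'.comap g := (J'.add_mem_iff_left hj').mp hx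
  rw [← hI] at ha
  exact J.add_mem ha hj

theorem snd_eq_zero_of_forall_mul_eq_zero
    (hann : ∀ (a : A) (j' : C), j' ∈ J' → (∀ y ∈ J', (g a + j') * y = 0) → g a + j' = 0)
    {x : BiAmalg f g J J'} (hx : ∀ r : BiAmalg f g J J', (r : B × C).1 = 0 → r * x = 0) :
    (x : B × C).2 = 0 := by
  obtain ⟨a, j, hj, j', hj', hxe⟩ := x.2
  rw [hxe]
  refine hann a j' hj' fun y hy => ?_
  have := congrArg (fun z : BiAmalg f g J J' => (z : B × C).2)
    (hx ⟨(0, y), 0, 0, J.zero_mem, y, hy, by simp⟩ rfl)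
  simpa [hxe, mul_comm] using this

theorem torsionBySet_torsionOf_one_eq_idealJ0 (hI : J.comap f = J'.comap g)
    (hann : ∀ (a : A) (j' : C), j' ∈ J' → (∀ y ∈ J', (g a + j') * y = 0) → g a + j' = 0) :
    Submodule.torsionBySet (BiAmalg f g J J') (BiAmalg f g J J')
      (Ideal.torsionOf (BiAmalg f g J J') (ImageAddIdeal f J) 1) = idealJ0 f g J J' := by
  ext x
  rw [Submodule.mem_torsionBySet_iff]
  constructor
  · intro hx
    have hx2 := snd_eq_zero_of_forall_mul_eq_zero hann fun r hr =>
      hx ⟨r, (mem_torsionOf_one_iff f g J J' r).mpr hr⟩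
    exact ⟨_, fst_mem_of_snd_mem hI (hx2 ▸ J'.zero_mem), Prod.ext rfl hx2⟩
  · rintro ⟨j, -, hx⟩ ⟨r, hr⟩
    rw [SetLike.mem_coe, mem_torsionOf_one_iff] at hr
    ext <;> simp [hx, hr]

end BiAmalg

/-- Both sides are killed by `0 × J'`, so this isomorphism of `A ⋈^{f,g}(J,J')`-modules is the
same as one of `(f(A)+J)`-modules. -/
theorem biAmalg_hom_iso (f : A →+* B) (g : A →+* C) (J : Ideal B) (J' : Ideal C)
    (hI : J.comap f = J'.comap g)
    (hann : ∀ (a : A) (j' : C), j' ∈ J' → (∀ y ∈ J', (g a + j') * y = 0) → g a + j' = 0) :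
    letI : Module (BiAmalg f g J J') (ImageAddIdeal f J) :=
      Module.compHom _ (BiAmalg.projFJ f g J J')
    Nonempty ((ImageAddIdeal f J →ₗ[BiAmalg f g J J'] BiAmalg f g J J')
      ≃ₗ[BiAmalg f g J J'] BiAmalg.idealJ0 f g J J') :=
  ⟨(Submodule.homEquivTorsionBySetTorsionOf 1 (BiAmalg.exists_smul_one_eq f g J J')).trans
    (LinearEquiv.ofEq _ _ (BiAmalg.torsionBySet_torsionOf_one_eq_idealJ0 hI hann))⟩
end
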